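/- Suppose f : X → Y is a visual large scale Lipschitz function between proper hyperbolic geodesic spaces with basepoints a and b = f(a), and n ≥ 1. The induced map tilde f : ∂X → ∂Y is n-to-1 (every point of ∂Y has at most n preimages) if and only if for each r > 0 there is B > 0 such that for any sequence of n+1 points x₁,…,x_{n+1} in X satisfying (x_i,x_j)_a < r for all i ≠ j, there are two different indices k, m ≤ n+1 with (f(x_k),f(x_m))_b ≤ B. -/

import Mathlib

open Filter Metric Set

noncomputable section

namespace Gromov

variable {X : Type*} [MetricSpace X] {Y : Type*} [MetricSpace Y]

/-- The Gromov product `(x,y)_a = (d(x,a)+d(y,a)-d(x,y))/2`. -/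
def gp (a x y : X) : ℝ := (dist x a + dist y a - dist x y) / 2

/-- Gromov `δ`-hyperbolicity via the `δ/4`-inequality. -/
def IsDeltaHyperbolic (X : Type*) [MetricSpace X] (δ : ℝ) : Prop :=
  ∀ x y z w : X, gp w x y ≥ min (gp w x z) (gp w z y) - δ / 4

/-- `γ` is a geodesic starting at `x`, parametrized by arclength on `[0, M]`. -/
def IsGeodesicOn (γ : ℝ → X) (x : X) (M : ℝ) : Prop :=
  γ 0 = x ∧ ∀ s ∈ Icc (0:ℝ) M, ∀ t ∈ Icc (0:ℝ) M, dist (γ s) (γ t) = |s - t|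

/-- Every two points are joined by a geodesic. -/
def IsGeodesicSpace (X : Type*) [MetricSpace X] : Prop :=
  ∀ x y : X, ∃ γ : ℝ → X, IsGeodesicOn γ x (dist x y) ∧ γ (dist x y) = y

/-- An infinite geodesic ray emanating from `x`. -/
def IsRay (γ : ℝ → X) (x : X) : Prop :=
  γ 0 = x ∧ ∀ s ∈ Ici (0:ℝ), ∀ t ∈ Ici (0:ℝ), dist (γ s) (γ t) = |s - t|

/-- `f` is `(l, μ)`-large scale Lipschitz. -/
def IsLSL (f : X → Y) (l μ : ℝ) : Prop :=
  ∀ x y : X, dist (f x) (f y) ≤ l * dist x y + μ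

/-- `f` is large scale Lipschitz. -/
def LSL (f : X → Y) : Prop := ∃ l μ : ℝ, 0 < l ∧ 0 < μ ∧ IsLSL f l μ

/-- The `(l2, μ2)`-radial lower bound condition with respect to `x₀`:
on every finite geodesic emanating from `x₀`, `l2·d(x,y) - μ2 ≤ d(f(x),f(y))`. -/
def IsRadialWith (f : X → Y) (x₀ : X) (l2 μ2 : ℝ) : Prop :=
  ∀ M, 0 ≤ M → ∀ γ : ℝ → X, IsGeodesicOn γ x₀ M →
    ∀ s ∈ Icc (0:ℝ) M, ∀ t ∈ Icc (0:ℝ) M,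
      l2 * dist (γ s) (γ t) - μ2 ≤ dist (f (γ s)) (f (γ t))

/-- `f` is a radial function with respect to `x₀`. -/
def Radial (f : X → Y) (x₀ : X) : Prop :=
  LSL f ∧ ∃ l2 μ2 : ℝ, 0 < l2 ∧ 0 < μ2 ∧ IsRadialWith f x₀ l2 μ2

/-- `f` is visual: for some basepoint `a`, `(x_n,y_n)_a → ∞` implies
`(f(x_n),f(y_n))_{f(a)} → ∞`. -/
def VisualFn (f : X → Y) : Prop :=
  ∃ a : X, ∀ x y : ℕ → X,
    Tendsto (fun n => gp a (x n) (y n)) atTop atTop →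
    Tendsto (fun n => gp (f a) (f (x n)) (f (y n))) atTop atTop

/-- `liminf_{i,j→∞} (x_i,x_j)_a = ∞`: the sequence converges to infinity. -/
def ConvSeq (a : X) (x : ℕ → X) : Prop :=
  Tendsto (fun p : ℕ × ℕ => gp a (x p.1) (x p.2)) atTop atTop

/-- `liminf_{i,j→∞} (x_i,y_j)_a = ∞`: the two sequences are equivalent. -/
def SeqEquiv (a : X) (x y : ℕ → X) : Prop :=
  Tendsto (fun p : ℕ × ℕ => gp a (x p.1) (y p.2)) atTop atTop

def BSeq (a : X) : Type _ := {x : ℕ → X // ConvSeq a x}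

/-- The sequential boundary `∂X` with basepoint `a`. -/
def Boundary (a : X) : Type _ := Quot (fun x y : BSeq a => SeqEquiv a x.1 y.1)

/-- The boundary point represented by a sequence. -/
def bpt (a : X) (x : ℕ → X) (hx : ConvSeq a x) : Boundary a :=
  Quot.mk _ ⟨x, hx⟩

/-- `liminf_{i,j→∞} (x_i,y_j)_a` as an extended real. -/
def gpSeqs (a : X) (x y : ℕ → X) : EReal :=
  liminf (fun p : ℕ × ℕ => ((gp a (x p.1) (y p.2)) : EReal)) atTop

/-- The basic neighborhood `U(p,r)` in the sequential boundary. -/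
def U (a : X) (p : Boundary a) (r : ℝ) : Set (Boundary a) :=
  {q | ∃ (x y : ℕ → X) (hx : ConvSeq a x) (hy : ConvSeq a y),
    bpt a x hx = p ∧ bpt a y hy = q ∧ (r : EReal) ≤ gpSeqs a x y}

instance (a : X) : TopologicalSpace (Boundary a) :=
  TopologicalSpace.generateFrom {s | ∃ p r, 0 < r ∧ s = U a p r}

/-- The union `X ∪ ∂X`. -/
def Comp (a : X) : Type _ := X ⊕ Boundary a

def Comp.inl {a : X} (x : X) : Comp a := Sum.inl x
def Comp.inr {a : X} (p : Boundary a) : Comp a := Sum.inr p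

/-- The extension of `U(p,r)` to `X ∪ ∂X`. -/
def UFull (a : X) (p : Boundary a) (r : ℝ) : Set (Comp a) :=
  {z : X ⊕ Boundary a | Sum.elim
    (fun x : X => ∃ (s : ℕ → X) (hs : ConvSeq a s), bpt a s hs = p ∧
      (r : EReal) ≤ liminf (fun i : ℕ => ((gp a (s i) x) : EReal)) atTop)
    (fun q : Boundary a => q ∈ U a p r) z}

instance (a : X) : TopologicalSpace (Comp a) :=
  TopologicalSpace.generateFrom
    ({s | ∃ u : Set X, IsOpen u ∧ s = Comp.inl '' u} ∪
     {s | ∃ p r, 0 < r ∧ s = UFull a p r})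

/-- The Gromov product of two boundary points:
`(p,q)_a = inf liminf_{i→∞} (x_i,y_i)_a` over representatives. -/
def gpBoundary (a : X) (p q : Boundary a) : EReal :=
  sInf {e : EReal | ∃ (x y : ℕ → X) (hx : ConvSeq a x) (hy : ConvSeq a y),
    bpt a x hx = p ∧ bpt a y hy = q ∧
    e = liminf (fun i : ℕ => ((gp a (x i) (y i)) : EReal)) atTop}

/-- `K^{-e}` for an extended real exponent `e` (with `K^{-∞} = 0`). -/
def negPow (K : ℝ) (e : EReal) : ℝ :=
  if e = ⊤ then 0 else if e = ⊥ then 0 else Real.rpow K (-(e.toReal))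

/-- `d` is a visual metric on `∂X` with parameters `K, C > 1`. -/
def IsVisualMetric (a : X) (d : Boundary a → Boundary a → ℝ) (K C : ℝ) : Prop :=
  1 < K ∧ 1 < C ∧ ∀ p q : Boundary a,
    negPow K (gpBoundary a p q) / C ≤ d p q ∧ d p q ≤ C * negPow K (gpBoundary a p q)

/-- A map between sets with distinguished distance functions is Hölder. -/
def IsHolder {A B : Type*} (dA : A → A → ℝ) (dB : B → B → ℝ) (g : A → B) : Prop :=
  ∃ L α : ℝ, 0 < L ∧ 0 < α ∧ ∀ p q : A, dB (g p) (g q) ≤ L * Real.rpow (dA p q) α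

/-- `(ξ₁,ξ₂)_a = liminf_{t→∞} (ξ₁(t),ξ₂(t))_a` for rays. -/
def gpRays (a : X) (ξ₁ ξ₂ : ℝ → X) : EReal :=
  liminf (fun t : ℝ => ((gp a (ξ₁ t) (ξ₂ t)) : EReal)) atTop

/-- The geodesic ray `ξ` represents the boundary point `p`. -/
def RayRepresents (a : X) (ξ : ℝ → X) (p : Boundary a) : Prop :=
  ∃ h : ConvSeq a (fun n : ℕ => ξ n), bpt a (fun n : ℕ => ξ n) h = p

/-- `(x,ξ)_a = liminf_{n→∞} (x,ξ(n))_a`. -/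
def gpPointRay (a x : X) (ξ : ℝ → X) : ℝ :=
  liminf (fun n : ℕ => gp a x (ξ n)) atTop

/-- `X` is a visual hyperbolic space with basepoint `a` and constant `D`. -/
def IsVisualSpace (a : X) (D : ℝ) : Prop :=
  ∀ x : X, ∃ ξ : ℝ → X, IsRay ξ a ∧ gpPointRay a x ξ > dist x a - D

/-- A maximal finite geodesic from `a`: it admits no proper geodesic extension. -/
def MaximalGeodesic (ζ : ℝ → X) (a : X) (M : ℝ) : Prop :=
  IsGeodesicOn ζ a M ∧
    ¬ ∃ (M' : ℝ) (ζ' : ℝ → X), M < M' ∧ IsGeodesicOn ζ' a M' ∧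
      ∀ t ∈ Icc (0:ℝ) M, ζ' t = ζ t

/-- `f : X → Y` is a radial extension with parameter `A` of `g : ∂X → ∂Y`
(`D` being the visuality constant of `X`). -/
def IsRadialExtension (a : X) (b : Y) (g : Boundary a → Boundary b)
    (A D : ℝ) (f : X → Y) : Prop :=
  f a = b ∧
  ∀ x : X, x ≠ a →
    ((∃ (ξ : ℝ → X) (t : ℝ), IsRay ξ a ∧ 0 ≤ t ∧ ξ t = x) →
      ∃ (ξ : ℝ → X) (t : ℝ) (η : ℝ → Y), IsRay ξ a ∧ 0 ≤ t ∧ ξ t = x ∧ IsRay η b ∧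
        (∃ p : Boundary a, RayRepresents a ξ p ∧ RayRepresents b η (g p)) ∧
        f x = η (A * t)) ∧
    ((¬ ∃ (ξ : ℝ → X) (t : ℝ), IsRay ξ a ∧ 0 ≤ t ∧ ξ t = x) →
      ∃ (M t : ℝ) (ζ ξ : ℝ → X) (η : ℝ → Y),
        MaximalGeodesic ζ a M ∧ t ∈ Icc (0:ℝ) M ∧ ζ t = x ∧
        IsRay ξ a ∧ gpPointRay a (ζ M) ξ > dist (ζ M) a - D ∧ IsRay η b ∧
        (∃ p : Boundary a, RayRepresents a ξ p ∧ RayRepresents b η (g p)) ∧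
        f x = η (A * t))

/-- `f` is coarsely surjective. -/
def CoarselySurjective (f : X → Y) : Prop :=
  ∃ S : ℝ, 0 < S ∧ ∀ y : Y, ∃ x : X, dist y (f x) ≤ S

/-- `f` is bornologous (coarse). -/
def Bornologous (f : X → Y) : Prop :=
  ∀ R : ℝ, 0 < R → ∃ S : ℝ, 0 < S ∧ ∀ x x' : X, dist x x' ≤ R → dist (f x) (f x') ≤ S

/-- `f` is a coarse embedding. -/
def CoarseEmbedding (f : X → Y) : Prop :=
  Bornologous f ∧
    ∀ R : ℝ, 0 < R → ∃ S : ℝ, 0 < S ∧ ∀ x x' : X, dist (f x) (f x') ≤ R → dist x x' ≤ S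

/-- `f` is coarsely `n`-to-1. -/
def CoarselyNto1 (f : X → Y) (n : ℕ) : Prop :=
  ∀ R : ℝ, 0 < R → ∃ S : ℝ, 0 < S ∧ ∀ A : Set Y, EMetric.diam A < ENNReal.ofReal R →
    ∃ B : Fin n → Set X, (f ⁻¹' A = ⋃ i, B i) ∧
      ∀ i, EMetric.diam (B i) < ENNReal.ofReal S

/-- `g : ∂X → ∂Y` is the boundary map induced by `f`, i.e. `g [(x_n)] = [(f(x_n))]`. -/
def InducedBoundaryMap (a : X) (f : X → Y) (g : Boundary a → Boundary (f a)) : Prop :=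
  ∀ (x : ℕ → X) (hx : ConvSeq a x) (hfx : ConvSeq (f a) (f ∘ x)),
    g (bpt a x hx) = bpt (f a) (f ∘ x) hfx

/-- `g` is (at most) `n`-to-1. -/
def NTo1 {A B : Type*} (g : A → B) (n : ℕ) : Prop :=
  ∀ b : B, ∃ s : Finset A, s.card ≤ n ∧ ∀ a : A, g a = b → a ∈ s

/-- Covering dimension at most `n`: every open cover admits an open refinement
of multiplicity at most `n+1`. -/
def CovDimLE (Z : Type*) [TopologicalSpace Z] (n : ℕ) : Prop :=
  ∀ 𝒰 : Set (Set Z), (∀ u ∈ 𝒰, IsOpen u) → ⋃₀ 𝒰 = univ →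
    ∃ 𝒱 : Set (Set Z), (∀ v ∈ 𝒱, IsOpen v) ∧ ⋃₀ 𝒱 = univ ∧
      (∀ v ∈ 𝒱, ∃ u ∈ 𝒰, v ⊆ u) ∧
      ∀ z : Z, {v ∈ 𝒱 | z ∈ v}.Finite ∧ {v ∈ 𝒱 | z ∈ v}.ncard ≤ n + 1

/-- `c_{f,n}(r)`: the supremum of numbers `B` such that there exist `n+1` points
with mutual Gromov products `< r` whose images have mutual Gromov products `≥ B`. -/
def cfn (a : X) (b : Y) (f : X → Y) (n : ℕ) (r : ℝ) : EReal :=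
  sSup {e : EReal | ∃ (B : ℝ) (x : Fin (n + 1) → X), e = (B : EReal) ∧
    (∀ i j, i ≠ j → gp a (x i) (x j) < r) ∧
    (∀ i j, i ≠ j → B ≤ gp b (f (x i)) (f (x j)))}

/-! If the condition fails for some `r`, there are configurations of `n + 1` points with mutual
Gromov products `< r` whose images have mutual Gromov products tending to infinity. By properness,
geodesics from `a` to these points subconverge to `n + 1` sequences; these represent distinct
points of `∂X`, since their mutual products stay below `r + δ/2`, while their images all
represent one point of `∂Y`. Conversely, `n + 1` distinct points in a fibre of `g` are
represented by sequences with eventually bounded mutual Gromov products whose images have mutual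
products tending to infinity, and evaluating all of them at one late index violates the
condition. -/

theorem nTo1_iff_forall_not_injective {A B : Type*} {g : A → B} {n : ℕ} :
    NTo1 g n ↔
      ∀ (b : B) (p : Fin (n + 1) → A), (∀ i, g (p i) = b) → ¬ Function.Injective p := by
  constructor
  · rintro hg b p hp hinj
    obtain ⟨s, hcard, hs⟩ := hg b
    have := Finset.card_le_card_of_injOn (s := .univ) p (fun i _ => hs _ (hp i)) hinj.injOn
    rw [Finset.card_univ, Fintype.card_fin] at this
    omega
  · intro h b
    have hcard : ∀ t : Finset A, (↑t ⊆ {a | g a = b}) → t.card ≤ n := by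
      intro t ht
      by_contra! hlt
      exact h b (fun i => t.equivFin.symm (Fin.castLE hlt i)) (fun i => ht (Subtype.prop _))
        (Subtype.val_injective.comp (t.equivFin.symm.injective.comp (Fin.castLE_injective _)))
    have hfin : {a | g a = b}.Finite := by
      by_contra hinf
      obtain ⟨t, hts, htc⟩ := Set.Infinite.exists_subset_card_eq hinf (n + 1)
      have := hcard t hts
      omega
    exact ⟨hfin.toFinset, hcard _ (by simp), by simp⟩

theorem gp_comm (a x y : X) : gp a x y = gp a y x := by
  unfold gp; rw [dist_comm x y]; ring

theorem gp_self (a x : X) : gp a x x = dist x a := by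
  simp [gp]

theorem gp_le_dist_left (a x y : X) : gp a x y ≤ dist x a := by
  unfold gp; linarith [dist_triangle y x a, dist_comm x y]

theorem gp_sub_dist_le_gp (a x x' y : X) : gp a x' y - dist x x' ≤ gp a x y := by
  unfold gp; linarith [dist_triangle x' x a, dist_triangle x x' y, dist_comm x x']

theorem gp_sub_dist_le_gp_base (a a' x y : X) : gp a x y - dist a a' ≤ gp a' x y := by
  unfold gp; linarith [dist_triangle x a' a, dist_triangle y a' a, dist_comm a a']

theorem tendsto_gp_base_change {ι : Type*} {l : Filter ι} {u v : ι → X} {a : X} (a' : X)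
    (h : Tendsto (fun k => gp a (u k) (v k)) l atTop) :
    Tendsto (fun k => gp a' (u k) (v k)) l atTop :=
  tendsto_atTop_mono (fun k => gp_sub_dist_le_gp_base a a' (u k) (v k))
    (tendsto_atTop_add_const_right _ _ h)

namespace IsDeltaHyperbolic

variable {δ : ℝ}

theorem nonneg (hX : IsDeltaHyperbolic X δ) (w : X) : 0 ≤ δ := by
  have := hX w w w w
  simp only [gp, dist_self, min_self] at this
  linarith

theorem le_gp_of_le_of_le (hX : IsDeltaHyperbolic X δ) {w x y z : X} {C : ℝ}
    (hxz : C ≤ gp w x z) (hzy : C ≤ gp w z y) : C - δ / 4 ≤ gp w x y := by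
  linarith [hX x y z w, le_min hxz hzy]

theorem le_gp_of_le_of_le_of_le (hX : IsDeltaHyperbolic X δ) {w x y z v : X} {C : ℝ}
    (hxy : C ≤ gp w x y) (hyz : C ≤ gp w y z) (hzv : C ≤ gp w z v) :
    C - δ / 2 ≤ gp w x v := by
  have hxz := hX.le_gp_of_le_of_le hxy hyz
  have := hX.le_gp_of_le_of_le (y := v) hxz (by linarith [hX.nonneg w])
  linarith

end IsDeltaHyperbolic

section SequentialBoundary

variable {a : X} {x y z : ℕ → X}

theorem seqEquiv_iff :
    SeqEquiv a x y ↔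
      ∀ C : ℝ, ∃ N : ℕ, ∀ k l, N ≤ k → N ≤ l → C ≤ gp a (x k) (y l) := by
  refine tendsto_atTop_atTop.trans ⟨fun h C => ?_, fun h C => ?_⟩
  · obtain ⟨⟨N₁, N₂⟩, hN⟩ := h C
    exact ⟨max N₁ N₂, fun k l hk hl =>
      hN (k, l) ⟨le_of_max_le_left hk, le_of_max_le_right hl⟩⟩
  · obtain ⟨N, hN⟩ := h C
    exact ⟨(N, N), fun p hp => hN p.1 p.2 hp.1 hp.2⟩

theorem SeqEquiv.symm (h : SeqEquiv a x y) : SeqEquiv a y x :=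
  seqEquiv_iff.2 fun C =>
    let ⟨N, hN⟩ := seqEquiv_iff.1 h C
    ⟨N, fun k l hk hl => gp_comm a (x l) (y k) ▸ hN l k hl hk⟩

theorem SeqEquiv.trans {δ : ℝ} (hX : IsDeltaHyperbolic X δ) (hxy : SeqEquiv a x y)
    (hyz : SeqEquiv a y z) : SeqEquiv a x z := by
  refine seqEquiv_iff.2 fun C => ?_
  obtain ⟨N₁, hN₁⟩ := seqEquiv_iff.1 hxy (C + δ / 4)
  obtain ⟨N₂, hN₂⟩ := seqEquiv_iff.1 hyz (C + δ / 4)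
  refine ⟨max N₁ N₂, fun k l hk hl => ?_⟩
  have := hX.le_gp_of_le_of_le (hN₁ k k (le_of_max_le_left hk) (le_of_max_le_left hk))
    (hN₂ k l (le_of_max_le_right hk) (le_of_max_le_right hl))
  linarith

theorem SeqEquiv.tendsto_gp (h : SeqEquiv a x y) :
    Tendsto (fun k => gp a (x k) (y k)) atTop atTop :=
  h.comp tendsto_atTop_diagonal

theorem seqEquiv_equivalence {δ : ℝ} (hX : IsDeltaHyperbolic X δ) (a : X) :
    Equivalence (fun u v : BSeq a => SeqEquiv a u.1 v.1) :=
  ⟨fun u => u.2, SeqEquiv.symm, SeqEquiv.trans hX⟩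

theorem bpt_eq_bpt_iff {δ : ℝ} (hX : IsDeltaHyperbolic X δ) (hx : ConvSeq a x)
    (hy : ConvSeq a y) : bpt a x hx = bpt a y hy ↔ SeqEquiv a x y :=
  ⟨fun h => (seqEquiv_equivalence hX a).eqvGen_iff.1 (Quot.eqvGen_exact h),
    fun h => Quot.sound h⟩

theorem eventually_gp_lt_of_not_seqEquiv {δ : ℝ} (hX : IsDeltaHyperbolic X δ)
    (hx : ConvSeq a x) (hy : ConvSeq a y) (hxy : ¬ SeqEquiv a x y) :
    ∀ᶠ r in atTop, ∀ᶠ k in atTop, gp a (x k) (y k) < r := by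
  obtain ⟨C, hC⟩ :
      ∃ C : ℝ, ∀ N : ℕ, ∃ k l, N ≤ k ∧ N ≤ l ∧ gp a (x k) (y l) < C := by
    simpa [seqEquiv_iff] using hxy
  obtain ⟨N₁, hN₁⟩ := seqEquiv_iff.1 hx (C + δ / 2)
  obtain ⟨N₂, hN₂⟩ := seqEquiv_iff.1 hy (C + δ / 2)
  obtain ⟨k₀, l₀, hk₀, hl₀, hlt⟩ := hC (max N₁ N₂)
  filter_upwards [eventually_ge_atTop (C + δ / 2)] with r hr
  filter_upwards [eventually_ge_atTop (max N₁ N₂)] with k hk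
  by_contra! hge
  have := hX.le_gp_of_le_of_le_of_le
    (hN₁ k₀ k (le_of_max_le_left hk₀) (le_of_max_le_left hk)) (hr.trans hge)
    (hN₂ k l₀ (le_of_max_le_right hk) (le_of_max_le_right hl₀))
  linarith

end SequentialBoundary

namespace IsGeodesicOn

variable {γ : ℝ → X} {a : X} {M s : ℝ}

theorem dist_base (hγ : IsGeodesicOn γ a M) (hs : s ∈ Icc 0 M) : dist (γ s) a = s := by
  rw [← hγ.1, hγ.2 s hs 0 ⟨le_rfl, hs.1.trans hs.2⟩, sub_zero, abs_of_nonneg hs.1]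

theorem gp_endpoint (hγ : IsGeodesicOn γ a M) (hs : s ∈ Icc 0 M) : gp a (γ s) (γ M) = s := by
  have hM : M ∈ Icc 0 M := ⟨hs.1.trans hs.2, le_rfl⟩
  rw [gp, hγ.dist_base hs, hγ.dist_base hM, hγ.2 s hs M hM, abs_of_nonpos (by linarith [hs.2])]
  ring

end IsGeodesicOn

theorem VisualFn.exists_le_gp {f : X → Y} (hf : VisualFn f) (a : X) (C : ℝ) :
    ∃ D : ℝ, ∀ u v : X, D ≤ gp a u v → C ≤ gp (f a) (f u) (f v) := by
  by_contra! h
  choose u v hD hC using h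
  obtain ⟨a', ha'⟩ := hf
  have hgp : Tendsto (fun k : ℕ => gp a (u k) (v k)) atTop atTop :=
    tendsto_atTop_mono (fun k => hD k) tendsto_natCast_atTop_atTop
  have hfgp := tendsto_gp_base_change (f a) (ha' _ _ (tendsto_gp_base_change a' hgp))
  obtain ⟨k, hk⟩ := (hfgp.eventually_ge_atTop C).exists
  exact (hC k).not_ge hk

theorem VisualFn.tendsto_gp_comp {f : X → Y} (hf : VisualFn f) (a : X) {ι : Type*}
    {l : Filter ι} {u v : ι → X} (h : Tendsto (fun k => gp a (u k) (v k)) l atTop) :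
    Tendsto (fun k => gp (f a) (f (u k)) (f (v k))) l atTop :=
  tendsto_atTop.2 fun C =>
    let ⟨D, hD⟩ := hf.exists_le_gp a C
    (tendsto_atTop.1 h D).mono fun _ => hD _ _

theorem LSL.tendsto_dist_of_tendsto_gp {f : X → Y} (hf : LSL f) {a : X} {ι : Type*}
    {l : Filter ι} {u v : ι → X} (h : Tendsto (fun k => gp (f a) (f (u k)) (f (v k))) l atTop) :
    Tendsto (fun k => dist (u k) a) l atTop := by
  obtain ⟨c, μ, hc, -, hlip⟩ := hf
  refine tendsto_atTop_mono (fun k => ?_)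
    ((tendsto_atTop_add_const_right _ (-μ) h).atTop_div_const hc)
  rw [div_le_iff₀ hc]
  linarith [gp_le_dist_left (f a) (f (u k)) (f (v k)), hlip (u k) a]

/-- The points `y k` converge to the boundary point represented by `L`:
`lim_s liminf_k (L s, y k)_a = ∞`. -/
def IsGromovLimit (a : X) (L y : ℕ → X) : Prop :=
  Tendsto (fun p : ℕ × ℕ => gp a (L p.1) (y p.2)) (atTop.curry atTop) atTop

namespace IsGromovLimit

variable {a : X} {L L' y y' : ℕ → X} {δ : ℝ}

theorem eventually_le_gp (hL : IsGromovLimit a L y) (C : ℝ) :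
    ∃ N : ℕ, ∀ s, N ≤ s → ∀ᶠ k in atTop, C ≤ gp a (L s) (y k) :=
  eventually_atTop.1 (eventually_curry_iff.1 (tendsto_atTop.1 hL C))

theorem seqEquiv (hX : IsDeltaHyperbolic X δ) (hL : IsGromovLimit a L y)
    (hL' : IsGromovLimit a L' y') (h : Tendsto (fun k => gp a (y k) (y' k)) atTop atTop) :
    SeqEquiv a L L' := by
  refine seqEquiv_iff.2 fun C => ?_
  obtain ⟨N, hN⟩ := hL.eventually_le_gp (C + δ / 2)
  obtain ⟨N', hN'⟩ := hL'.eventually_le_gp (C + δ / 2)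
  refine ⟨max N N', fun s t hs ht => ?_⟩
  obtain ⟨k, hk, hk', hyy'⟩ := ((hN s (le_of_max_le_left hs)).and
    ((hN' t (le_of_max_le_right ht)).and (h.eventually_ge_atTop (C + δ / 2)))).exists
  have := hX.le_gp_of_le_of_le_of_le hk hyy' (gp_comm a (L' t) (y' k) ▸ hk')
  linarith

theorem not_seqEquiv (hX : IsDeltaHyperbolic X δ) (hL : IsGromovLimit a L y)
    (hL' : IsGromovLimit a L' y') {r : ℝ} (h : ∀ k, gp a (y k) (y' k) < r) :
    ¬ SeqEquiv a L L' := by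
  intro hLL'
  obtain ⟨N, hN⟩ := hL.eventually_le_gp (r + δ / 2)
  obtain ⟨N', hN'⟩ := hL'.eventually_le_gp (r + δ / 2)
  obtain ⟨M, hM⟩ := seqEquiv_iff.1 hLL' (r + δ / 2)
  set s := max M (max N N')
  obtain ⟨k, hk, hk'⟩ := ((hN s (by omega)).and (hN' s (by omega))).exists
  have := hX.le_gp_of_le_of_le_of_le (gp_comm a (L s) (y k) ▸ hk)
    (hM s s (by omega) (by omega)) hk'
  linarith [h k]

theorem comp {f : X → Y} (hf : VisualFn f) (hL : IsGromovLimit a L y) :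
    IsGromovLimit (f a) (f ∘ L) (f ∘ y) :=
  hf.tendsto_gp_comp a hL

end IsGromovLimit

theorem exists_isGromovLimit_subseq [ProperSpace X] (hgX : IsGeodesicSpace X) {ι : Type*}
    [Countable ι] (a : X) {y : ℕ → ι → X}
    (hy : ∀ i, Tendsto (fun k => dist (y k i) a) atTop atTop) :
    ∃ (φ : ℕ → ℕ) (L : ι → ℕ → X),
      StrictMono φ ∧ ∀ i, IsGromovLimit a (L i) (fun k => y (φ k) i) := by
  choose γ hγ hγy using fun k i => hgX a (y k i)
  have hmem : ∀ (s : ℕ) k i, min (s : ℝ) (dist a (y k i)) ∈ Icc 0 (dist a (y k i)) :=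
    fun s k i => ⟨le_min (Nat.cast_nonneg s) dist_nonneg, min_le_right _ _⟩
  -- truncating at `y k i` keeps `c k (i, s)` in `closedBall a s` for all `k`, so Tychonoff applies
  set c : ℕ → ι × ℕ → X := fun k q => γ k q.1 (min (q.2 : ℝ) (dist a (y k q.1)))
  have hc : ∀ k, c k ∈ univ.pi fun q : ι × ℕ => closedBall a q.2 := fun k q _ => by
    rw [mem_closedBall, (hγ k q.1).dist_base (hmem _ _ _)]
    exact min_le_left _ _
  obtain ⟨L, -, φ, hφ, hcL⟩ :=
    (isCompact_univ_pi fun q : ι × ℕ => isCompact_closedBall a (q.2 : ℝ)).tendsto_subseq hc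
  refine ⟨φ, fun i s => L (i, s), hφ, fun i =>
    tendsto_atTop.2 fun C => eventually_curry_iff.2 ?_⟩
  filter_upwards [tendsto_natCast_atTop_atTop.eventually_ge_atTop (C + 1)] with s hs
  filter_upwards [((hy i).comp hφ.tendsto_atTop).eventually_ge_atTop (s : ℝ),
    Metric.tendsto_nhds.1 (tendsto_pi_nhds.1 hcL (i, s)) 1 one_pos] with k hks hk1
  rw [Function.comp_apply, dist_comm] at hks
  have hcs : c (φ k) (i, s) = γ (φ k) i s := by simp only [c, min_eq_left hks]
  have hgp := (hγ (φ k) i).gp_endpoint ⟨Nat.cast_nonneg s, hks⟩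
  rw [hγy, ← hcs] at hgp
  rw [Function.comp_apply] at hk1
  linarith [gp_sub_dist_le_gp a (L (i, s)) (c (φ k) (i, s)) (y (φ k) i),
    dist_comm (L (i, s)) (c (φ k) (i, s))]

theorem forall_exists_gp_le_of_nTo1 [ProperSpace X] {δ δ' : ℝ} (hX : IsDeltaHyperbolic X δ)
    (hY : IsDeltaHyperbolic Y δ') (hgX : IsGeodesicSpace X) {f : X → Y} (hf : LSL f)
    (hvis : VisualFn f) (a : X) {n : ℕ} (hn : 1 ≤ n) {g : Boundary a → Boundary (f a)}
    (hg : InducedBoundaryMap a f g) (hN : NTo1 g n) (r : ℝ) :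
    ∃ B : ℝ, 0 < B ∧
      ∀ x : Fin (n + 1) → X, (∀ i j, i ≠ j → gp a (x i) (x j) < r) →
        ∃ k m : Fin (n + 1), k ≠ m ∧ gp (f a) (f (x k)) (f (x m)) ≤ B := by
  by_contra! h
  choose y hyr hyf using fun k : ℕ => h (k + 1) (by positivity)
  have hfy : ∀ i j, i ≠ j → Tendsto (fun k => gp (f a) (f (y k i)) (f (y k j))) atTop atTop :=
    fun i j hij => tendsto_atTop_mono (fun k => (hyf k i j hij).le)
      (tendsto_atTop_add_const_right _ 1 tendsto_natCast_atTop_atTop)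
  have : Nontrivial (Fin (n + 1)) := Fin.nontrivial_iff_two_le.2 (by omega)
  have hdist : ∀ i, Tendsto (fun k => dist (y k i) a) atTop atTop := fun i =>
    let ⟨j, hji⟩ := exists_ne i
    hf.tendsto_dist_of_tendsto_gp (hfy i j hji.symm)
  obtain ⟨φ, L, hφ, hL⟩ := exists_isGromovLimit_subseq hgX a hdist
  have hconv : ∀ i, ConvSeq a (L i) := fun i => (hL i).seqEquiv hX (hL i)
    (by simp only [gp_self]; exact (hdist i).comp hφ.tendsto_atTop)
  set p : Fin (n + 1) → Boundary a := fun i => bpt a (L i) (hconv i)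
  have hgp : ∀ i j, g (p i) = g (p j) := by
    intro i j
    rw [hg _ (hconv i) (hvis.tendsto_gp_comp a (hconv i)),
      hg _ (hconv j) (hvis.tendsto_gp_comp a (hconv j))]
    rcases eq_or_ne i j with rfl | hij
    · rfl
    · exact Quot.sound (((hL i).comp hvis).seqEquiv hY ((hL j).comp hvis)
        ((hfy i j hij).comp hφ.tendsto_atTop))
  refine nTo1_iff_forall_not_injective.1 hN (g (p 0)) p (fun i => hgp i 0) fun i j hij => ?_
  by_contra hne
  exact (hL i).not_seqEquiv hX (hL j) (fun k => hyr (φ k) i j hne) ((bpt_eq_bpt_iff hX _ _).1 hij)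

theorem nTo1_of_forall_exists_gp_le {δ δ' : ℝ} (hX : IsDeltaHyperbolic X δ)
    (hY : IsDeltaHyperbolic Y δ') {f : X → Y} (hvis : VisualFn f) (a : X) {n : ℕ}
    {g : Boundary a → Boundary (f a)} (hg : InducedBoundaryMap a f g)
    (H : ∀ r : ℝ, 0 < r → ∃ B : ℝ, 0 < B ∧
      ∀ x : Fin (n + 1) → X, (∀ i j, i ≠ j → gp a (x i) (x j) < r) →
        ∃ k m : Fin (n + 1), k ≠ m ∧ gp (f a) (f (x k)) (f (x m)) ≤ B) :
    NTo1 g n := by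
  refine nTo1_iff_forall_not_injective.2 fun q p hpq hinj => ?_
  choose x hx using fun i => Quot.exists_rep (p i)
  have hxp : ∀ i, bpt a (x i).1 (x i).2 = p i := hx
  have hfx : ∀ i, ConvSeq (f a) (f ∘ (x i).1) := fun i => hvis.tendsto_gp_comp a (x i).2
  have hne : ∀ i j, i ≠ j → ¬ SeqEquiv a (x i).1 (x j).1 := fun i j hij h =>
    hij (hinj (by rw [← hxp, ← hxp]; exact Quot.sound h))
  have hfeq : ∀ i j, SeqEquiv (f a) (f ∘ (x i).1) (f ∘ (x j).1) := fun i j =>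
    (bpt_eq_bpt_iff hY (hfx i) (hfx j)).1
      (by rw [← hg _ (x i).2, ← hg _ (x j).2, hxp, hxp, hpq, hpq])
  obtain ⟨r, hr, hsmall⟩ : ∃ r : ℝ, 0 < r ∧
      ∀ᶠ k in atTop, ∀ i j, i ≠ j → gp a ((x i).1 k) ((x j).1 k) < r := by
    refine ((eventually_gt_atTop 0).and ?_).exists
    simp only [eventually_all]
    exact fun i j hij => eventually_gp_lt_of_not_seqEquiv hX (x i).2 (x j).2 (hne i j hij)
  obtain ⟨B, -, hB⟩ := H r hr
  have hlarge : ∀ᶠ k in atTop, ∀ i j, B < gp (f a) (f ((x i).1 k)) (f ((x j).1 k)) :=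
    eventually_all.2 fun i => eventually_all.2 fun j => (hfeq i j).tendsto_gp.eventually_gt_atTop B
  obtain ⟨k, hks, hkl⟩ := (hsmall.and hlarge).exists
  obtain ⟨i, j, -, hle⟩ := hB (fun i => (x i).1 k) hks
  exact (hkl i j).not_ge hle

theorem stmt14_general {X : Type*} [MetricSpace X] [ProperSpace X]
    {Y : Type*} [MetricSpace Y]
    (δ : ℝ) (hX : IsDeltaHyperbolic X δ) (hY : IsDeltaHyperbolic Y δ)
    (hgX : IsGeodesicSpace X)
    (f : X → Y) (hf : LSL f) (hvis : VisualFn f) (a : X) (n : ℕ) (hn : 1 ≤ n)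
    (g : Boundary a → Boundary (f a)) (hg : InducedBoundaryMap a f g) :
    NTo1 g n ↔
      ∀ r : ℝ, 0 < r → ∃ B : ℝ, 0 < B ∧
        ∀ x : Fin (n + 1) → X, (∀ i j, i ≠ j → gp a (x i) (x j) < r) →
          ∃ k m : Fin (n + 1), k ≠ m ∧ gp (f a) (f (x k)) (f (x m)) ≤ B :=
  ⟨fun hN r _ => forall_exists_gp_le_of_nTo1 hX hY hgX hf hvis a hn hg hN r,
    nTo1_of_forall_exists_gp_le hX hY hvis a hg⟩

/-- the induced boundary map of a visual LSL function is `n`-to-1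
iff for each `r > 0` there is `B > 0` such that among any `n+1` points with
mutual Gromov products `< r` two of the images have Gromov product `≤ B`. -/
theorem stmt14 {X : Type*} [MetricSpace X] [ProperSpace X]
    {Y : Type*} [MetricSpace Y] [ProperSpace Y]
    (δ : ℝ) (hX : IsDeltaHyperbolic X δ) (hY : IsDeltaHyperbolic Y δ)
    (hgX : IsGeodesicSpace X) (hgY : IsGeodesicSpace Y)
    (f : X → Y) (hf : LSL f) (hvis : VisualFn f) (a : X) (n : ℕ) (hn : 1 ≤ n)
    (g : Boundary a → Boundary (f a)) (hg : InducedBoundaryMap a f g) :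
    NTo1 g n ↔
      ∀ r : ℝ, 0 < r → ∃ B : ℝ, 0 < B ∧
        ∀ x : Fin (n + 1) → X, (∀ i j, i ≠ j → gp a (x i) (x j) < r) →
          ∃ k m : Fin (n + 1), k ≠ m ∧ gp (f a) (f (x k)) (f (x m)) ≤ B :=
  stmt14_general δ hX hY hgX f hf hvis a n hn g hg

end Gromov
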